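/- Let μ be a vertex of Γ with v_Γ(μ) = 1. Then every ξ ∈ H_μ satisfies d̂_μ·ξ ≥ 1. In particular, if d̂_μ = 0 then H_μ is empty. -/

import Mathlib

open Matrix BigOperators

open scoped Classical

noncomputable section

/-- Proximity data of a dual graph on vertex set `Fin N`, built from a single
root vertex by a finite sequence of elementary modifications. Vertices are
ordered by creation; each new vertex is proximate to at most two existing
(earlier) vertices, which must be adjacent to each other at that time if
there are two of them. -/
structure DualGraph where
  N : ℕ
  Npos : 0 < N
  prox : Fin N → Fin N → Prop
  prox_lt : ∀ {μ ν}, prox μ ν → ν < μ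
  prox_card : ∀ μ, {ν | prox μ ν}.ncard ≤ 2
  prox_nonempty : ∀ μ : Fin N, 0 < (μ : ℕ) → ∃ ν, prox μ ν
  prox_pair : ∀ {μ a b}, prox μ a → prox μ b → a ≠ b →
      (prox a b ∨ prox b a) ∧ ∀ ρ, ρ < μ → ¬(prox ρ a ∧ prox ρ b)

namespace DualGraph

variable (G : DualGraph)

/-- The proximity matrix `P`. -/
def P : Matrix (Fin G.N) (Fin G.N) ℚ :=
  fun μ ν => if μ = ν then 1 else if G.prox μ ν then -1 else 0

/-- `Q = P⁻¹`. -/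
def Q : Matrix (Fin G.N) (Fin G.N) ℚ := (G.P)⁻¹

/-- The valuation matrix `V = (PᵀP)⁻¹`. -/
def V : Matrix (Fin G.N) (Fin G.N) ℚ := (G.Pᵀ * G.P)⁻¹

/-- Adjacency in the dual graph: `μ ∼ ν` iff `(PᵀP)_{μν} = -1`. -/
def adj (μ ν : Fin G.N) : Prop := μ ≠ ν ∧ (G.Pᵀ * G.P) μ ν = -1

lemma adj_symm {μ ν : Fin G.N} (h : G.adj μ ν) : G.adj ν μ := by
  obtain ⟨hne, h2⟩ := h
  refine ⟨hne.symm, ?_⟩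
  have ht : (G.Pᵀ * G.P)ᵀ = G.Pᵀ * G.P := by
    rw [Matrix.transpose_mul, Matrix.transpose_transpose]
  calc (G.Pᵀ * G.P) ν μ = (G.Pᵀ * G.P)ᵀ μ ν := rfl
    _ = (G.Pᵀ * G.P) μ ν := by rw [ht]
    _ = -1 := h2

/-- The dual graph as a simple graph. -/
def graph : SimpleGraph (Fin G.N) where
  Adj := G.adj
  symm := ⟨fun _ _ h => G.adj_symm h⟩
  loopless := ⟨fun μ h => h.1 rfl⟩

/-- The graph distance `d(μ,ν)`. -/
def dist (μ ν : Fin G.N) : ℕ := G.graph.dist μ ν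

/-- The set of vertices on the unique path `[μ,γ]` from `μ` to `γ`. -/
def pathSet (μ γ : Fin G.N) : Finset (Fin G.N) :=
  Finset.univ.filter (fun ν => G.dist μ ν + G.dist ν γ = G.dist μ γ)

/-- The branch `Γ^μ_ν` emanating from `μ` towards `ν`: the maximal connected
subgraph of `Γ` containing `ν` but not `μ` (with `Γ^μ_μ = ∅`). -/
def branch (μ ν : Fin G.N) : Finset (Fin G.N) :=
  Finset.univ.filter (fun η => ν ≠ μ ∧ η ≠ μ ∧ μ ∉ G.pathSet ν η)

/-- The set of vertices adjacent to `μ`. -/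
def nbrs (μ : Fin G.N) : Finset (Fin G.N) := Finset.univ.filter (fun ν => G.adj μ ν)

/-- The valence `v_Γ(μ)`: the number of vertices adjacent to `μ`. -/
def valence (μ : Fin G.N) : ℕ := (G.nbrs μ).card

/-- The weight `w_Γ(μ) = (PᵀP)_{μμ}`. -/
def w (μ : Fin G.N) : ℚ := (G.Pᵀ * G.P) μ μ

/-- The canonical vector `k`, `k_ν = Σ_μ q_{νμ}`. -/
def kvec : Fin G.N → ℚ := fun ν => ∑ μ, G.Q ν μ

/-- A divisor with valuation vector `f` is antinef iff its factorization
vector `f̂ = f PᵀP` is nonnegative. -/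
def Antinef (f : Fin G.N → ℚ) : Prop := ∀ ν, 0 ≤ (f ᵥ* (G.Pᵀ * G.P)) ν

/-- `λ(fE, gE; ν) = (f_ν + k_ν + 1)/g_ν` for divisors with valuation
vectors `f`, `g`. -/
def lamDiv (f g : Fin G.N → ℚ) (ν : Fin G.N) : ℚ := (f ν + G.kvec ν + 1) / g ν

/-- `ρ_{[μ,γ]}(ν) = V_{γν}/V_{μν}`. -/
def rho (μ γ ν : Fin G.N) : ℚ := G.V γ ν / G.V μ ν

/-- `r̂_{[μ,γ]} = 𝟙_γ − ρ_{[μ,γ]}(μ)·𝟙_μ`. -/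
def rhat (μ γ : Fin G.N) : Fin G.N → ℚ :=
  fun j => (if j = γ then 1 else 0) - G.rho μ γ μ * (if j = μ then 1 else 0)

/-- `φ_η^{[μ,γ]}(ν) = (r̂_{[μ,γ]}V)_ν / V_{ην}`. -/
def phi (η μ γ ν : Fin G.N) : ℚ := (G.rhat μ γ ᵥ* G.V) ν / G.V η ν

/-- The transform `f̂_{⟨ĝ⟩[ĥ]}` relative to the vertex `μ`. -/
def transform (μ : Fin G.N) (fh gh hh : Fin G.N → ℚ) : Fin G.N → ℚ :=
  fh - (∑ i ∈ G.nbrs μ, ∑ j ∈ G.branch μ i, gh j • G.rhat i j)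
     + ∑ i ∈ G.nbrs μ, hh i • G.rhat μ i

/-- The transform `f̂^𝒩 = f̂ − Σ_i f̂_i·r̂_{[μ,i]}` relative to the vertex `μ`. -/
def nmap (μ : Fin G.N) (fh : Fin G.N → ℚ) : Fin G.N → ℚ :=
  fh - ∑ i, fh i • G.rhat μ i

/-- A vertex is free if it is proximate to at most one vertex. -/
def Free (μ : Fin G.N) : Prop := {ν | G.prox μ ν}.ncard ≤ 1

/-- `μ` is infinitely near to `ν` (written `ν ⊂ μ`): the reflexive-transitive
closure of proximity. -/
def InfNear (μ ν : Fin G.N) : Prop := Relation.ReflTransGen G.prox μ ν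

/-- The root vertex. -/
def root : Fin G.N := ⟨0, G.Npos⟩

/-- The branch `Γ^μ_ν` is anterior to `μ` if `μ` is infinitely near to some of
its vertices; otherwise it is posterior. -/
def Anterior (μ ν : Fin G.N) : Prop := ∃ η ∈ G.branch μ ν, G.InfNear μ η

/-- The pair `(γ,τ)` associated to `μ`. -/
def PairAssociated (γ τ μ : Fin G.N) : Prop :=
  G.InfNear τ γ ∧ G.InfNear μ τ ∧ G.Free τ ∧
  (∀ ν, G.Free ν → G.InfNear μ ν → G.InfNear τ ν) ∧
  ((¬ G.Free γ ∧ ∀ ν, ¬ G.Free ν → G.InfNear τ ν → G.InfNear γ ν) ∨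
   ((∀ ν, G.InfNear τ ν → G.Free ν) ∧ γ = G.root))

/-- The entries of `V` as natural numbers (they are positive integers). -/
def Vnat (μ ν : Fin G.N) : ℕ := (G.V μ ν).num.toNat

/-- The submonoid `SV^μ_ν` of `ℕ` generated by `{V_{μi} : i ∈ Γ^μ_ν ∪ {μ}}`. -/
def SVb (μ ν : Fin G.N) : AddSubmonoid ℕ :=
  AddSubmonoid.closure ↑((insert μ (G.branch μ ν)).image (G.Vnat μ))

/-- `s^μ_ν = gcd{V_{μi} : i ∈ Γ^μ_ν ∪ {μ}}`. -/
def sgcd (μ ν : Fin G.N) : ℕ := (insert μ (G.branch μ ν)).gcd (G.Vnat μ)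

/-- The submonoid `S^μ` of `ℕ` generated by the `s^μ_ν`, `ν ∈ Γ`. -/
def Ssg (μ : Fin G.N) : AddSubmonoid ℕ :=
  AddSubmonoid.closure (Set.range (fun ν => G.sgcd μ ν))

/-- The valuation vector `d = d̂V` of the ideal with factorization vector `d̂`. -/
def dval (dh : Fin G.N → ℕ) : Fin G.N → ℚ := (fun i => (dh i : ℚ)) ᵥ* G.V

/-- `λ(a,ν) = (a + k_ν + 1)/d_ν`. -/
def lamA (dh : Fin G.N → ℕ) (a : ℚ) (ν : Fin G.N) : ℚ :=
  (a + G.kvec ν + 1) / G.dval dh ν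

/-- The set of jumping numbers of the ideal with factorization vector `d̂`
supported at the vertex `μ`. -/
def Hset (dh : Fin G.N → ℕ) (μ : Fin G.N) : Set ℚ :=
  { ξ | ∃ f : Fin G.N → ℤ, G.Antinef (fun i => (f i : ℚ)) ∧
      (∀ ν, G.lamA dh (f μ : ℚ) μ ≤ G.lamA dh (f ν : ℚ) ν) ∧
      ξ = G.lamA dh (f μ : ℚ) μ }

end DualGraph
end

/-!
Let `η` be the unique neighbour of `μ`, `M = PᵀP` and `w = w_Γ(μ)`, so that the `μ`-th entry
of `y M` is `w y_μ - y_η`. Reading this off for `f`, `k` and `d` gives `w f_μ ≥ f_η`,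
`w k_μ - k_η = 2 - w` and `w d_μ - d_η = d̂_μ`. Hence `a := f_μ + k_μ + 1` and
`b := f_η + k_η + 1` satisfy `b ≤ w a - 1`, and minimality of `λ` at `μ` against `η`,
`a d_η ≤ b d_μ`, becomes `a (w d_μ - d̂_μ) ≤ (w a - 1) d_μ`, i.e. `d_μ ≤ d̂_μ a`.
Clearing denominators is legitimate because `d > 0`: `V = Q Qᵀ` and `Q` is nonnegative with
`Q_{ν,root} ≥ 1`, by the recursion `Q = 1 + (proximity matrix) Q`.
-/

open Finset

namespace DualGraph

variable (G : DualGraph)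

lemma prox_irrefl (μ : Fin G.N) : ¬ G.prox μ μ := fun h => (G.prox_lt h).false

lemma prox_asymm {μ ν : Fin G.N} (h : G.prox μ ν) : ¬ G.prox ν μ :=
  fun h' => (G.prox_lt h).not_gt (G.prox_lt h')

lemma adj_comm {μ ν : Fin G.N} : G.adj μ ν ↔ G.adj ν μ := ⟨G.adj_symm, G.adj_symm⟩

lemma P_apply (μ ν : Fin G.N) :
    G.P μ ν = (if μ = ν then 1 else 0) - if G.prox μ ν then 1 else 0 := by
  by_cases h : μ = ν
  · subst h; simp [P, G.prox_irrefl]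
  · by_cases h' : G.prox μ ν <;> simp [P, h, h']

lemma det_P : G.P.det = 1 := by
  refine (det_of_isLowerTriangular _ fun i j hij => ?_).trans (by simp [P])
  rw [OrderDual.toDual_lt_toDual] at hij
  have : ¬ G.prox i j := fun h => (G.prox_lt h).not_gt hij
  simp [P, hij.ne, this]

lemma P_mul_Q : G.P * G.Q = 1 := mul_nonsing_inv _ (by rw [det_P]; exact isUnit_one)

lemma V_mul_PtP : G.V * (G.Pᵀ * G.P) = 1 :=
  nonsing_inv_mul _ (by simp [det_mul, det_transpose, det_P])

lemma V_eq_Q_mul_transpose : G.V = G.Q * G.Qᵀ := by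
  rw [V, Q, Matrix.mul_inv_rev, transpose_nonsing_inv]

lemma Q_eq_add_sum_prox (μ ν : Fin G.N) :
    G.Q μ ν = (if μ = ν then 1 else 0) + ∑ ρ ∈ univ.filter (G.prox μ ·), G.Q ρ ν := by
  have h := congr_fun₂ G.P_mul_Q μ ν
  simp only [mul_apply, P_apply, sub_mul, ite_mul, one_mul, zero_mul, sum_sub_distrib,
    sum_ite_eq, mem_univ, if_true, ← sum_filter, one_apply] at h
  linarith

lemma Q_nonneg_and_one_le_Q_root (μ : Fin G.N) : (∀ ν, 0 ≤ G.Q μ ν) ∧ 1 ≤ G.Q μ G.root := by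
  induction μ using WellFoundedLT.induction with
  | _ μ ih =>
  have hsum : ∀ ν, 0 ≤ ∑ ρ ∈ univ.filter (G.prox μ ·), G.Q ρ ν := fun ν =>
    sum_nonneg fun ρ hρ => (ih ρ (G.prox_lt (mem_filter.1 hρ).2)).1 ν
  refine ⟨fun ν => ?_, ?_⟩
  · rw [Q_eq_add_sum_prox]
    have := hsum ν
    split_ifs <;> linarith
  · rw [Q_eq_add_sum_prox]
    rcases eq_or_ne μ G.root with rfl | hμ
    · simpa using hsum G.root
    obtain ⟨ρ, hρ⟩ := G.prox_nonempty μ (Nat.pos_of_ne_zero fun h => hμ (Fin.ext h))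
    have hle := single_le_sum (f := (G.Q · G.root))
      (fun ρ hρ => (ih ρ (G.prox_lt (mem_filter.1 hρ).2)).1 G.root)
      (mem_filter.2 ⟨mem_univ ρ, hρ⟩)
    have := (ih ρ (G.prox_lt hρ)).2
    rw [if_neg hμ]
    linarith

lemma V_pos (μ ν : Fin G.N) : 0 < G.V μ ν := by
  obtain ⟨hμ, hμ1⟩ := G.Q_nonneg_and_one_le_Q_root μ
  obtain ⟨hν, hν1⟩ := G.Q_nonneg_and_one_le_Q_root ν
  rw [V_eq_Q_mul_transpose, mul_apply]
  calc 0 < G.Q μ G.root * G.Q ν G.root := by nlinarith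
    _ ≤ ∑ ρ, G.Q μ ρ * G.Qᵀ ρ ν :=
      single_le_sum (f := fun ρ => G.Q μ ρ * G.Qᵀ ρ ν)
        (fun ρ _ => mul_nonneg (hμ ρ) (hν ρ)) (mem_univ G.root)

lemma dval_pos {dh : Fin G.N → ℕ} (hdh : dh ≠ 0) (ν : Fin G.N) : 0 < G.dval dh ν := by
  obtain ⟨i, hi⟩ := Function.ne_iff.1 hdh
  refine sum_pos' (fun j _ => mul_nonneg (Nat.cast_nonneg _) (G.V_pos j ν).le)
    ⟨i, mem_univ i, mul_pos ?_ (G.V_pos i ν)⟩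
  exact_mod_cast Nat.pos_of_ne_zero hi

lemma dval_vecMul_PtP (dh : Fin G.N → ℕ) :
    G.dval dh ᵥ* (G.Pᵀ * G.P) = fun i => (dh i : ℚ) := by
  rw [dval, vecMul_vecMul, V_mul_PtP, vecMul_one]

lemma kvec_vecMul_PtP (μ : Fin G.N) : (G.kvec ᵥ* (G.Pᵀ * G.P)) μ = 2 - G.w μ := by
  have hk : G.kvec ᵥ* G.Pᵀ = fun _ => 1 := by
    have : G.kvec = G.Q *ᵥ fun _ => 1 := by
      funext ν
      simp [kvec, mulVec, dotProduct]
    rw [vecMul_transpose, this, mulVec_mulVec, P_mul_Q, one_mulVec]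
  -- each column of `P` is `𝟙_μ` minus an indicator disjoint from it, so `P + P ∘ P = 2 𝟙_μ`
  have hcol : ∀ ρ, G.P ρ μ + G.P ρ μ * G.P ρ μ = if ρ = μ then 2 else 0 := by
    intro ρ
    by_cases h : ρ = μ
    · subst h; simp [P_apply, G.prox_irrefl]; norm_num
    · by_cases h' : G.prox ρ μ <;> simp [P_apply, h, h']
  rw [← vecMul_vecMul, hk, w, mul_apply]
  simp only [vecMul, dotProduct, one_mul, transpose_apply]
  rw [eq_sub_iff_add_eq, ← sum_add_distrib]
  simp [hcol]

lemma PtP_apply_of_ne {μ ν : Fin G.N} (h : μ ≠ ν) :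
    (G.Pᵀ * G.P) μ ν = #(univ.filter fun ρ => G.prox ρ μ ∧ G.prox ρ ν)
      - (if G.prox μ ν then 1 else 0) - if G.prox ν μ then 1 else 0 := by
  simp only [mul_apply, transpose_apply, P_apply, mul_sub, mul_ite, mul_one, mul_zero,
    sum_sub_distrib, sum_ite_eq', mem_univ, if_true, if_neg (Ne.symm h), ← sum_filter, sum_const,
    nsmul_eq_mul, filter_filter, mem_filter, true_and, and_comm]
  ring

lemma card_common_prox_le_one {μ ν : Fin G.N} (h : μ ≠ ν) :
    #(univ.filter fun ρ => G.prox ρ μ ∧ G.prox ρ ν) ≤ 1 := by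
  refine card_le_one.2 fun a ha b hb => ?_
  simp only [mem_filter, mem_univ, true_and] at ha hb
  by_contra hab
  rcases lt_or_gt_of_ne hab with hlt | hlt
  · exact (G.prox_pair hb.1 hb.2 h).2 a hlt ha
  · exact (G.prox_pair ha.1 ha.2 h).2 b hlt hb

lemma PtP_apply_eq_zero_or_eq_neg_one {μ ν : Fin G.N} (h : μ ≠ ν) :
    (G.Pᵀ * G.P) μ ν = 0 ∨ (G.Pᵀ * G.P) μ ν = -1 := by
  rw [G.PtP_apply_of_ne h]
  rcases Nat.le_one_iff_eq_zero_or_eq_one.1 (G.card_common_prox_le_one h) with h0 | h1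
  · by_cases hμν : G.prox μ ν
    · simp [h0, hμν, G.prox_asymm hμν]
    · by_cases hνμ : G.prox ν μ <;> simp [h0, hμν, hνμ]
  · -- a vertex proximate to both `μ` and `ν` forces one of them to be proximate to the other
    obtain ⟨ρ, hρ⟩ := card_eq_one.1 h1
    have hρ' := (mem_filter.1 (hρ ▸ mem_singleton_self ρ)).2
    rcases (G.prox_pair hρ'.1 hρ'.2 h).1 with hμν | hνμ
    · simp [h1, hμν, G.prox_asymm hμν]
    · simp [h1, hνμ, G.prox_asymm hνμ]

lemma PtP_apply (μ ν : Fin G.N) :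
    (G.Pᵀ * G.P) μ ν = (if μ = ν then G.w μ else 0) - if G.adj μ ν then 1 else 0 := by
  by_cases h : μ = ν
  · subst h; simp [w, adj]
  · by_cases hadj : G.adj μ ν
    · simp [h, hadj, hadj.2]
    · have : (G.Pᵀ * G.P) μ ν ≠ -1 := fun h' => hadj ⟨h, h'⟩
      simpa [h, hadj] using (G.PtP_apply_eq_zero_or_eq_neg_one h).resolve_right this

lemma vecMul_PtP_apply (y : Fin G.N → ℚ) (μ : Fin G.N) :
    (y ᵥ* (G.Pᵀ * G.P)) μ = G.w μ * y μ - ∑ ν ∈ G.nbrs μ, y ν := by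
  simp only [vecMul, dotProduct, PtP_apply, mul_sub, mul_ite, mul_zero, mul_one, sum_sub_distrib,
    sum_ite_eq', mem_univ, if_true, ← sum_filter, nbrs, G.adj_comm]
  ring

theorem one_le_mul_of_mem_Hset {dh : Fin G.N → ℕ} (hdh : dh ≠ 0) {μ η : Fin G.N}
    (hμ : G.nbrs μ = {η}) {ξ : ℚ} (hξ : ξ ∈ G.Hset dh μ) : 1 ≤ (dh μ : ℚ) * ξ := by
  obtain ⟨f, hanti, hmin, rfl⟩ := hξ
  have hrow (y : Fin G.N → ℚ) : (y ᵥ* (G.Pᵀ * G.P)) μ = G.w μ * y μ - y η := by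
    rw [vecMul_PtP_apply, hμ, sum_singleton]
  have hf : 0 ≤ G.w μ * f μ - f η := by simpa only [hrow] using hanti μ
  have hk : G.w μ * G.kvec μ - G.kvec η = 2 - G.w μ := by rw [← hrow, kvec_vecMul_PtP]
  have hd : G.dval dh η = G.w μ * G.dval dh μ - dh μ := by
    linarith [show (G.dval dh ᵥ* (G.Pᵀ * G.P)) μ = dh μ by rw [dval_vecMul_PtP], hrow (G.dval dh)]
  have hdμ := G.dval_pos hdh μ
  have hmin := hmin η
  rw [lamA, lamA, div_le_div_iff₀ hdμ (G.dval_pos hdh η), hd] at hmin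
  rw [lamA, ← mul_div_assoc, le_div_iff₀ hdμ, one_mul]
  have hb : (f η + G.kvec η + 1 : ℚ) ≤ G.w μ * (f μ + G.kvec μ + 1) - 1 := by linarith
  nlinarith [mul_le_mul_of_nonneg_right hb hdμ.le]

end DualGraph

/-- If `v_Γ(μ) = 1` then every `ξ ∈ H_μ` satisfies `d̂_μ·ξ ≥ 1`; in particular
`H_μ = ∅` when `d̂_μ = 0`. -/
theorem stmt17 (G : DualGraph) (μ : Fin G.N) (dh : Fin G.N → ℕ) (hdh : dh ≠ 0)
    (hval : G.valence μ = 1) :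
    (∀ ξ ∈ G.Hset dh μ, 1 ≤ (dh μ : ℚ) * ξ) ∧
    (dh μ = 0 → G.Hset dh μ = ∅) := by
  obtain ⟨η, hη⟩ := card_eq_one.1 hval
  have key (ξ) (hξ : ξ ∈ G.Hset dh μ) : 1 ≤ (dh μ : ℚ) * ξ := G.one_le_mul_of_mem_Hset hdh hη hξ
  refine ⟨key, fun h0 => Set.eq_empty_of_forall_notMem fun ξ hξ => ?_⟩
  exact absurd (key ξ hξ) (by simp [h0])
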